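/- arXiv:1010.5742 — 2 statements merged into one kernel-verified Lean document; each statement's English description precedes it below -/
import Mathlib

section
/- Let $g : [0,T] \to \mathbb{R}$ be continuous, extended to all of $\mathbb{R}$ by $g(t) = g(T)$ for $t > T$ and $g(t) = g(0)$ for $t < 0$. Suppose there exists an integrable function $\rho \in L^1(0,T;\mathbb{R})$ and some $h_0 > 0$ such that $\frac{g(t+h) - g(t)}{h} \le \rho(t)$ for a.e. $t \in [0,T]$ and all $0 < h \le h_0$. Then for all $0 \le \alpha \le \beta \le T$, $g(\beta) - g(\alpha) \le \int_\alpha^\beta \limsup_{h \to 0^+} \frac{g(r+h) - g(r)}{h} \, dr$. -/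
/-!
For continuous `g`, the integral over `[α, β]` of the difference quotient `D_h` equals
`h⁻¹ ∫_β^{β+h} g - h⁻¹ ∫_α^{α+h} g`, which tends to `g β - g α` as `h → 0`. Along a sequence
`h_n → 0⁺` the functions `ρ - D_{h_n}` are nonnegative, so Fatou's lemma applied to them bounds
`∫ (ρ - limsup D_h)⁺` by `∫ ρ - (g β - g α)`; this gives both the integrability of the limsup and
the inequality. The limsup is measurable since, by continuity in `h`, it can be taken over
rational `h`.
-/

open Filter MeasureTheory Set Topology

lemma ContinuousOn.continuous_of_eq_outside_Icc {α β : Type*} [LinearOrder α] [TopologicalSpace α]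
    [OrderTopology α] [TopologicalSpace β] {a b : α} {g : α → β} (hab : a ≤ b)
    (hg : ContinuousOn g (Icc a b)) (hb : ∀ t, b < t → g t = g b) (ha : ∀ t, t < a → g t = g a) :
    Continuous g := by
  have hext : IccExtend hab ((Icc a b).domRestrict g) = g := by
    funext t
    rcases lt_or_ge t a with hta | hat
    · rw [IccExtend_of_le_left _ _ hta.le, ha t hta]; rfl
    rcases le_or_gt t b with htb | hbt
    · exact IccExtend_of_mem _ _ ⟨hat, htb⟩
    · rw [IccExtend_of_right_le _ _ hbt.le, hb t hbt]; rfl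
  exact hext ▸ hg.domRestrict.Icc_extend'

lemma limsup_nhdsGT_eq_limsup_comap_ratCast {φ : ℝ → ℝ} {a : ℝ} (hφ : ContinuousOn φ (Ioi a)) :
    limsup φ (𝓝[>] a) = limsup (fun q : ℚ => φ q) (comap ((↑) : ℚ → ℝ) (𝓝[>] a)) := by
  simp only [limsup_eq]
  congr 1
  ext c
  simp only [mem_ofPred_eq, eventually_comap]
  refine ⟨fun h => h.mono fun x hx q hq => hq ▸ hx, fun h => ?_⟩
  obtain ⟨ε, hε, hq⟩ := (nhdsGT_basis a).eventually_iff.1 h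
  refine (nhdsGT_basis a).eventually_iff.2 ⟨ε, hε, fun x hx => ?_⟩
  by_contra! hlt
  obtain ⟨U, hUlt, hUopen, hxU⟩ := eventually_nhds_iff.1
    ((hφ.continuousAt (Ioi_mem_nhds hx.1)).eventually_const_lt hlt)
  obtain ⟨q, hqU, hqI⟩ := Rat.denseRange_cast.exists_mem_open (hUopen.inter isOpen_Ioo) ⟨x, hxU, hx⟩
  exact (hUlt _ hqU).not_ge (hq hqI q rfl)

lemma measurable_limsup_nhdsGT {α : Type*} [MeasurableSpace α] {F : ℝ → α → ℝ} {a : ℝ}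
    (hF : ∀ h, Measurable (F h)) (hcont : ∀ x, ContinuousOn (F · x) (Ioi a)) :
    Measurable fun x => limsup (F · x) (𝓝[>] a) := by
  obtain ⟨s, hs⟩ := (comap ((↑) : ℚ → ℝ) (𝓝[>] a)).exists_antitone_basis
  simp_rw [limsup_nhdsGT_eq_limsup_comap_ratCast (hcont _)]
  exact Measurable.limsup' (fun q => hF q) ⟨hs.toHasBasis, to_countable _⟩
    fun i => (s i).to_countable

lemma Continuous.tendsto_integral_slope {g : ℝ → ℝ} (hg : Continuous g) (α β : ℝ) :
    Tendsto (fun h => ∫ r in α..β, (g (r + h) - g r) / h) (𝓝[≠] 0) (𝓝 (g β - g α)) := by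
  have hmean : ∀ x, Tendsto (fun h => h⁻¹ * ∫ t in x..x + h, g t) (𝓝[≠] 0) (𝓝 (g x)) := fun x => by
    simpa using (intervalIntegral.integral_hasDerivAt_right (hg.intervalIntegrable x x)
      (hg.stronglyMeasurableAtFilter _ _) hg.continuousAt).tendsto_slope_zero
  refine ((hmean β).sub (hmean α)).congr fun h => ?_
  have hshift : Continuous fun r => g (r + h) := by fun_prop
  rw [intervalIntegral.integral_div, intervalIntegral.integral_sub (hshift.intervalIntegrable _ _)
    (hg.intervalIntegrable _ _), intervalIntegral.integral_comp_add_right (fun r => g r),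
    intervalIntegral.integral_interval_sub_interval_comm' (hg.intervalIntegrable _ _)
    (hg.intervalIntegrable _ _) (hg.intervalIntegrable _ _)]
  ring

-- `limsup` in `ℝ` is `0` when the values tend to `-∞`, hence the `max`.
lemma limsup_le_max_zero_of_eventually_le {ι : Type*} {l : Filter ι} {u : ι → ℝ} {a : ℝ}
    (h : ∀ᶠ i in l, u i ≤ a) : limsup u l ≤ max a 0 := by
  rw [limsup_eq]
  by_cases hbdd : BddBelow {b | ∀ᶠ i in l, u i ≤ b}
  · exact le_max_of_le_left (csInf_le hbdd h)
  · exact (Real.sInf_of_not_bddBelow hbdd).trans_le (le_max_right _ _)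

lemma ofReal_sub_le_liminf_ofReal_sub {ι : Type*} {l : Filter ι} {u : ι → ℝ} {L : ℝ} (c : ℝ)
    (hu : ∀ b, L < b → ∀ᶠ i in l, u i < b) :
    ENNReal.ofReal (c - L) ≤ liminf (fun i => ENNReal.ofReal (c - u i)) l := by
  have hcont : Tendsto (fun b => ENNReal.ofReal (c - b)) (𝓝[>] L) (𝓝 (ENNReal.ofReal (c - L))) :=
    ((ENNReal.continuous_ofReal.comp (continuous_sub_left c)).tendsto L).mono_left
      nhdsWithin_le_nhds
  refine le_of_tendsto hcont (eventually_nhdsWithin_of_forall fun b hb => ?_)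
  exact le_liminf_of_le (by isBoundedDefault)
    ((hu b hb).mono fun i hi => ENNReal.ofReal_le_ofReal (by linarith))

section ReverseFatou

variable {α : Type*} [MeasurableSpace α] {μ : Measure α} {f : ℕ → α → ℝ} {ρ L : α → ℝ} {I : ℝ}

-- `hfL` says `limsup_n f n x ≤ L x` without the junk value of `limsup` at `-∞`.
lemma lintegral_ofReal_sub_le_of_tendsto_integral (hρ : Integrable ρ μ)
    (hf : ∀ n, Integrable (f n) μ) (hfρ : ∀ n, f n ≤ᵐ[μ] ρ)
    (hfL : ∀ᵐ x ∂μ, ∀ b, L x < b → ∀ᶠ n in atTop, f n x < b)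
    (hI : Tendsto (fun n => ∫ x, f n x ∂μ) atTop (𝓝 I)) :
    ∫⁻ x, ENNReal.ofReal (ρ x - L x) ∂μ ≤ ENNReal.ofReal (∫ x, ρ x ∂μ - I) := by
  have hgap : ∀ n, ∫⁻ x, ENNReal.ofReal (ρ x - f n x) ∂μ
      = ENNReal.ofReal (∫ x, ρ x ∂μ - ∫ x, f n x ∂μ) := fun n => by
    rw [← integral_sub hρ (hf n)]
    exact (ofReal_integral_eq_lintegral_ofReal (hρ.sub (hf n))
      ((hfρ n).mono fun x hx => sub_nonneg.2 hx)).symm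
  calc ∫⁻ x, ENNReal.ofReal (ρ x - L x) ∂μ
      ≤ ∫⁻ x, liminf (fun n => ENNReal.ofReal (ρ x - f n x)) atTop ∂μ :=
        lintegral_mono_ae (hfL.mono fun x hx => ofReal_sub_le_liminf_ofReal_sub _ hx)
    _ ≤ liminf (fun n => ∫⁻ x, ENNReal.ofReal (ρ x - f n x) ∂μ) atTop :=
        lintegral_liminf_le' fun n => (hρ.aemeasurable.sub (hf n).aemeasurable).ennreal_ofReal
    _ = ENNReal.ofReal (∫ x, ρ x ∂μ - I) := by
        simp_rw [hgap]
        exact ((ENNReal.continuous_ofReal.tendsto _).comp (tendsto_const_nhds.sub hI)).liminf_eq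

lemma integrable_and_le_integral_of_tendsto_integral {G : α → ℝ} (hρ : Integrable ρ μ)
    (hf : ∀ n, Integrable (f n) μ) (hfρ : ∀ n, f n ≤ᵐ[μ] ρ)
    (hL : AEStronglyMeasurable L μ) (hG : Integrable G μ) (hLG : L ≤ᵐ[μ] G)
    (hfL : ∀ᵐ x ∂μ, ∀ b, L x < b → ∀ᶠ n in atTop, f n x < b)
    (hI : Tendsto (fun n => ∫ x, f n x ∂μ) atTop (𝓝 I)) :
    Integrable L μ ∧ I ≤ ∫ x, L x ∂μ := by
  have hfatou := lintegral_ofReal_sub_le_of_tendsto_integral hρ hf hfρ hfL hI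
  have hIρ : I ≤ ∫ x, ρ x ∂μ := le_of_tendsto' hI fun n => integral_mono_ae (hf n) hρ (hfρ n)
  set p : α → ℝ := fun x => (ENNReal.ofReal (ρ x - L x)).toReal
  have hpm : AEMeasurable (fun x => ENNReal.ofReal (ρ x - L x)) μ :=
    (hρ.aemeasurable.sub hL.aemeasurable).ennreal_ofReal
  have hp : Integrable p μ :=
    integrable_toReal_of_lintegral_ne_top hpm (hfatou.trans_lt ENNReal.ofReal_lt_top).ne
  have hρLp : ∀ x, ρ x - L x ≤ p x := fun x => by
    simp only [p, ENNReal.toReal_ofReal']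
    exact le_max_left _ _
  have hLint : Integrable L μ := integrable_of_le_of_le hL
    (Eventually.of_forall fun x => show ρ x - p x ≤ L x by linarith [hρLp x]) hLG (hρ.sub hp) hG
  refine ⟨hLint, ?_⟩
  have hp_le : ∫ x, p x ∂μ ≤ ∫ x, ρ x ∂μ - I := by
    rw [integral_toReal hpm (Eventually.of_forall fun _ => ENNReal.ofReal_lt_top)]
    exact ENNReal.toReal_le_of_le_ofReal (sub_nonneg.2 hIρ) hfatou
  have hρL_le : ∫ x, ρ x - L x ∂μ ≤ ∫ x, p x ∂μ := integral_mono (hρ.sub hLint) hp hρLp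
  rw [integral_sub hρ hLint] at hρL_le
  linarith

end ReverseFatou

/-- Fatou-type lemma for right difference quotients (Lemma 10 of the paper):
if `g` is continuous on `[0,T]`, extended constantly outside, and its right
difference quotients are dominated by an integrable `ρ`, then
`g β - g α ≤ ∫_α^β limsup_{h→0+} (g(r+h)-g(r))/h dr`. -/
theorem fatou_difference_quotient
    (T : ℝ) (hT : 0 < T) (g : ℝ → ℝ)
    (hg : ContinuousOn g (Icc 0 T))
    (hext_top : ∀ t : ℝ, T < t → g t = g T)
    (hext_bot : ∀ t : ℝ, t < 0 → g t = g 0)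
    (ρ : ℝ → ℝ) (hρ : IntegrableOn ρ (Icc 0 T))
    (h0 : ℝ) (hh0 : 0 < h0)
    (hdom : ∀ᵐ t ∂(volume.restrict (Icc 0 T)),
      ∀ h : ℝ, 0 < h → h ≤ h0 → (g (t + h) - g t) / h ≤ ρ t) :
    ∀ α β : ℝ, 0 ≤ α → α ≤ β → β ≤ T →
      g β - g α ≤ ∫ r in α..β,
        Filter.limsup (fun h : ℝ => (g (r + h) - g r) / h) (nhdsWithin 0 (Ioi 0)) := by
  have hgc : Continuous g := hg.continuous_of_eq_outside_Icc hT.le hext_top hext_bot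
  intro α β hα hαβ hβT
  obtain ⟨c, -, hc_mem, hc_lim⟩ := exists_seq_strictAnti_tendsto' hh0
  have hc : Tendsto c atTop (𝓝[>] 0) :=
    tendsto_nhdsWithin_iff.2 ⟨hc_lim, Eventually.of_forall fun n => (hc_mem n).1⟩
  have hsub : Ioc α β ⊆ Icc 0 T := fun x hx => ⟨hα.trans hx.1.le, hx.2.trans hβT⟩
  have hdomαβ : ∀ᵐ r ∂volume.restrict (Ioc α β),
      ∀ h : ℝ, 0 < h → h ≤ h0 → (g (r + h) - g r) / h ≤ ρ r :=
    ae_restrict_of_ae_restrict_of_subset hsub hdom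
  have hdom_nhds : ∀ᵐ r ∂volume.restrict (Ioc α β),
      ∀ᶠ h in 𝓝[>] 0, (g (r + h) - g r) / h ≤ ρ r :=
    hdomαβ.mono fun r hr => eventually_of_mem (Ioc_mem_nhdsGT hh0) fun h hh => hr h hh.1 hh.2
  have hslope_cont : ∀ r, ContinuousOn (fun h => (g (r + h) - g r) / h) (Ioi 0) := fun r =>
    ((hgc.comp (continuous_const_add r)).sub continuous_const).continuousOn.div continuousOn_id
      fun _ hh => ne_of_gt hh
  have hslope_int : Tendsto (fun h => ∫ r in α..β, (g (r + h) - g r) / h) (𝓝[>] 0)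
      (𝓝 (g β - g α)) :=
    (hgc.tendsto_integral_slope α β).mono_left (nhdsWithin_mono _ fun _ hx => ne_of_gt hx)
  rw [intervalIntegral.integral_of_le hαβ]
  refine (integrable_and_le_integral_of_tendsto_integral
    (f := fun n r => (g (r + c n) - g r) / c n) (hρ.mono_set hsub)
    (fun n => (by fun_prop : Continuous fun r => (g (r + c n) - g r) / c n).integrableOn_Ioc)
    (fun n => hdomαβ.mono fun r hr => hr _ (hc_mem n).1 (hc_mem n).2.le)
    (measurable_limsup_nhdsGT (fun h => by fun_prop) hslope_cont).aestronglyMeasurable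
    (hρ.mono_set hsub).pos_part
    (hdom_nhds.mono fun r hr => limsup_le_max_zero_of_eventually_le hr)
    (hdom_nhds.mono fun r hr b hb => hc.eventually (eventually_lt_of_limsup_lt hb ⟨ρ r, hr⟩))
    ((hslope_int.comp hc).congr fun n => intervalIntegral.integral_of_le hαβ)).2
end

section
/- Let $g : [0,T] \to \mathbb{R}$ be continuous (extended constantly outside $[0,T]$) and suppose its right difference quotients $(g(t+h)-g(t))/h$ are dominated for $0 < h \le h_0$ by an integrable $\rho$. If moreover $\limsup_{h \to 0^+} \frac{g(t+h)-g(t)}{h} \le 0$ for a.e. $t \in [0,T]$, then $g$ is nonincreasing on $[0,T]$. -/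
open Filter MeasureTheory Set
open scoped Topology

/-!
Since `g` is constant outside `[0,T]`, it is continuous on `ℝ`, and for `a ≤ b` the Steklov
identity `∫_a^b (g(t+h) - g(t))/h dt = ⨍_b^{b+h} g - ⨍_a^{a+h} g` shows that the integrals of the
difference quotients tend to `g b - g a` as `h → 0⁺`. These integrals are bounded by the integrals
of the positive parts of the quotients, which tend to `0` a.e. because the upper Dini derivative
is nonpositive, and are dominated by `max ρ 0`; by dominated convergence `g b - g a ≤ 0`.
-/

theorem ContinuousOn.continuous_of_eq_endpoints_outside_Icc {g : ℝ → ℝ} {a b : ℝ}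
    (hg : ContinuousOn g (Icc a b)) (hab : a ≤ b) (hbot : ∀ t, t < a → g t = g a)
    (htop : ∀ t, b < t → g t = g b) : Continuous g := by
  have hproj : ∀ t, g (projIcc a b hab t) = g t := by
    intro t
    rcases lt_or_ge t a with hta | hat
    · rw [projIcc_of_le_left hab hta.le, hbot t hta]
    rcases le_or_gt t b with htb | hbt
    · rw [projIcc_of_mem hab ⟨hat, htb⟩]
    · rw [projIcc_of_right_le hab hbt.le, htop t hbt]
  exact (hg.comp_continuous (continuous_subtype_val.comp continuous_projIcc)
    fun t => (projIcc a b hab t).2).congr hproj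

theorem Continuous.tendsto_inv_mul_integral_add {g : ℝ → ℝ} (hg : Continuous g) (x : ℝ) :
    Tendsto (fun h => h⁻¹ * ∫ t in x..x + h, g t) (𝓝[≠] 0) (𝓝 (g x)) := by
  have hderiv : HasDerivAt (fun u => ∫ t in x..u, g t) (g x) x :=
    intervalIntegral.integral_hasDerivAt_right (hg.intervalIntegrable x x)
      (hg.stronglyMeasurableAtFilter _ _) hg.continuousAt
  simpa using hasDerivAt_iff_tendsto_slope_zero.mp hderiv

theorem Continuous.tendsto_intervalIntegral_diffQuot {g : ℝ → ℝ} (hg : Continuous g) (a b : ℝ) :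
    Tendsto (fun h => ∫ t in a..b, (g (t + h) - g t) / h) (𝓝[≠] 0) (𝓝 (g b - g a)) := by
  have hsplit : ∀ h, ∫ t in a..b, (g (t + h) - g t) / h =
      h⁻¹ * (∫ t in b..b + h, g t) - h⁻¹ * ∫ t in a..a + h, g t := by
    intro h
    have hshift : IntervalIntegrable (fun t => g (t + h)) volume a b :=
      (hg.comp (continuous_add_const h)).intervalIntegrable a b
    rw [intervalIntegral.integral_div,
      intervalIntegral.integral_sub hshift (hg.intervalIntegrable a b),
      intervalIntegral.integral_comp_add_right (fun t => g t),
      intervalIntegral.integral_interval_sub_interval_comm' (hg.intervalIntegrable _ _)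
        (hg.intervalIntegrable _ _) (hg.intervalIntegrable _ _)]
    ring
  simp_rw [hsplit]
  exact (hg.tendsto_inv_mul_integral_add b).sub (hg.tendsto_inv_mul_integral_add a)

theorem tendsto_max_zero_of_limsup_nonpos {ι : Type*} {l : Filter ι} {u : ι → ℝ}
    (hbdd : IsBoundedUnder (· ≤ ·) l u) (hu : limsup u l ≤ 0) :
    Tendsto (fun i => max (u i) 0) l (𝓝 0) := by
  refine tendsto_order.2
    ⟨fun c hc => Eventually.of_forall fun i => hc.trans_le (le_max_right _ _), fun c hc => ?_⟩
  filter_upwards [eventually_lt_of_limsup_lt (hu.trans_lt hc) hbdd] with i hi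
  exact max_lt hi hc

theorem nonpos_of_tendsto_integral_of_dominated {α ι : Type*} [MeasurableSpace α] {μ : Measure α}
    {l : Filter ι} [l.IsCountablyGenerated] [l.NeBot] {F : ι → α → ℝ} {ρ : α → ℝ} {L : ℝ}
    (hF : ∀ᶠ i in l, Integrable (F i) μ) (hρ : Integrable ρ μ)
    (hdom : ∀ᶠ i in l, ∀ᵐ x ∂μ, F i x ≤ ρ x)
    (hlim : ∀ᵐ x ∂μ, Tendsto (fun i => max (F i x) 0) l (𝓝 0))
    (hL : Tendsto (fun i => ∫ x, F i x ∂μ) l (𝓝 L)) : L ≤ 0 := by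
  have hpos : Tendsto (fun i => ∫ x, max (F i x) 0 ∂μ) l (𝓝 0) := by
    have := tendsto_integral_filter_of_dominated_convergence (fun x => max (ρ x) 0)
      (hF.mono fun i hi => hi.pos_part.aestronglyMeasurable)
      (hdom.mono fun i hi => hi.mono fun x hx => by
        rw [Real.norm_of_nonneg (le_max_right _ _)]; exact max_le_max_right 0 hx)
      hρ.pos_part hlim
    simpa using this
  refine le_of_tendsto_of_tendsto hL hpos ?_
  filter_upwards [hF] with i hi
  exact integral_mono hi hi.pos_part fun x => le_max_left _ _

/-- If `g` is continuous on `[0,T]` (extended constantly outside), its right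
difference quotients are dominated by an integrable `ρ`, and the upper right
Dini derivative is `≤ 0` a.e., then `g` is nonincreasing on `[0,T]`. -/
theorem nonincreasing_of_dini_nonpos
    (T : ℝ) (hT : 0 < T) (g : ℝ → ℝ)
    (hg : ContinuousOn g (Icc 0 T))
    (hext_top : ∀ t : ℝ, T < t → g t = g T)
    (hext_bot : ∀ t : ℝ, t < 0 → g t = g 0)
    (ρ : ℝ → ℝ) (hρ : IntegrableOn ρ (Icc 0 T))
    (h0 : ℝ) (hh0 : 0 < h0)
    (hdom : ∀ᵐ t ∂(volume.restrict (Icc 0 T)),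
      ∀ h : ℝ, 0 < h → h ≤ h0 → (g (t + h) - g t) / h ≤ ρ t)
    (hdini : ∀ᵐ t ∂(volume.restrict (Icc 0 T)),
      Filter.limsup (fun h : ℝ => (g (t + h) - g t) / h) (nhdsWithin 0 (Ioi 0)) ≤ 0) :
    AntitoneOn g (Icc 0 T) := by
  have hgc : Continuous g := hg.continuous_of_eq_endpoints_outside_Icc hT.le hext_bot hext_top
  intro a ha b hb hab
  have hsub : Ioc a b ⊆ Icc 0 T := fun t ht => ⟨ha.1.trans ht.1.le, ht.2.trans hb.2⟩
  have hdom' := ae_restrict_of_ae_restrict_of_subset hsub hdom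
  have hsmall : ∀ᶠ h in 𝓝[>] (0 : ℝ), h ∈ Ioc 0 h0 := Ioc_mem_nhdsGT hh0
  rw [← sub_nonpos]
  refine nonpos_of_tendsto_integral_of_dominated (μ := volume.restrict (Ioc a b))
    (F := fun h t => (g (t + h) - g t) / h) (Eventually.of_forall fun h =>
      (((hgc.comp (continuous_add_const h)).sub hgc).div_const h).integrableOn_Ioc)
    (hρ.mono_set hsub) (hsmall.mono fun h hh => hdom'.mono fun t ht => ht h hh.1 hh.2) ?_ ?_
  · filter_upwards [hdom', ae_restrict_of_ae_restrict_of_subset hsub hdini] with t hbdd hlimsup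
    exact tendsto_max_zero_of_limsup_nonpos
      (isBoundedUnder_of_eventually_le (hsmall.mono fun h hh => hbdd h hh.1 hh.2)) hlimsup
  · simp_rw [← intervalIntegral.integral_of_le hab]
    exact (hgc.tendsto_intervalIntegral_diffQuot a b).mono_left
      (nhdsWithin_mono _ fun h hh => ne_of_gt hh)
end
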